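/- arXiv:1403.2663 — 2 statements merged into one kernel-verified Lean document; each statement's English description precedes it below -/
import Mathlib

section
/- Let A : ℝ^n → M a map sending p to a Hermitian m×m matrix, linear in p, with m odd and n ≥ 2. Then there exists a nonzero p with det A(p) = 0. -/
open Matrix

theorem exists_degenerate_of_odd_hermitian_symbol
    (m n : ℕ) (hm : Odd m) (hn : 2 ≤ n)
    (A : (Fin n → ℝ) →ₗ[ℝ] Matrix (Fin m) (Fin m) ℂ)
    (hherm : ∀ p, (A p).IsHermitian) :
    ∃ p : Fin n → ℝ, p ≠ 0 ∧ (A p).det = 0 := by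
  -- det A(p) is real for every p
  have hreal : ∀ p, ((A p).det).im = 0 := by
    intro p
    have h := (hherm p).symm ▸ (A p).det_conjTranspose
    -- h : det (A p) = star (det (A p))  after rewriting
    have h2 : (A p).det = star ((A p).det) := by
      conv_lhs => rw [← (hherm p)]
      exact (A p).det_conjTranspose
    have := Complex.conj_eq_iff_im.mp h2.symm
    exact this
  -- path on the sphere
  set e0 : Fin n → ℝ := Pi.single ⟨0, by omega⟩ 1 with he0
  set e1 : Fin n → ℝ := Pi.single ⟨1, by omega⟩ 1 with he1
  set q : ℝ → (Fin n → ℝ) := fun t => Real.cos t • e0 + Real.sin t • e1 with hq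
  have hqne : ∀ t, q t ≠ 0 := by
    intro t ht
    have hc : q t ⟨0, by omega⟩ = Real.cos t := by
      simp [hq, he0, he1, Pi.single_apply, Fin.ext_iff]
    have hs : q t ⟨1, by omega⟩ = Real.sin t := by
      simp [hq, he0, he1, Pi.single_apply, Fin.ext_iff]
    rw [ht] at hc hs
    have := Real.sin_sq_add_cos_sq t
    rw [← hc, ← hs] at this
    simp at this
  set f : ℝ → ℝ := fun t => ((A (q t)).det).re with hf
  have hcont : Continuous f := by
    have hA : Continuous fun p : Fin n → ℝ => A p := A.continuous_of_finiteDimensional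
    have : Continuous q := by
      apply Continuous.add
      · exact (Real.continuous_cos).smul continuous_const
      · exact (Real.continuous_sin).smul continuous_const
    exact Complex.continuous_re.comp ((hA.comp this).matrix_det)
  have hqpi : q Real.pi = -(q 0) := by
    simp [hq]
  have hfpi : f Real.pi = - f 0 := by
    have : A (q Real.pi) = - A (q 0) := by rw [hqpi, map_neg]
    have hdet : (A (q Real.pi)).det = (-1) ^ m * (A (q 0)).det := by
      rw [this, det_neg, Fintype.card_fin]
    rw [hf]
    simp only [hdet, hm.neg_one_pow]
    simp
  -- IVT: f has a zero on [0, π]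
  have key : ∃ t, f t = 0 := by
    rcases le_or_gt (f 0) 0 with h | h
    · have : (0 : ℝ) ∈ Set.Icc (f 0) (f Real.pi) := by
        constructor
        · exact h
        · rw [hfpi]; linarith
      have := intermediate_value_Icc (le_of_lt Real.pi_pos) hcont.continuousOn this
      obtain ⟨t, _, ht⟩ := this
      exact ⟨t, ht⟩
    · have : (0 : ℝ) ∈ Set.Icc (f Real.pi) (f 0) := by
        constructor
        · rw [hfpi]; linarith
        · exact le_of_lt h
      have := intermediate_value_Icc' (le_of_lt Real.pi_pos) hcont.continuousOn this
      obtain ⟨t, _, ht⟩ := this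
      exact ⟨t, ht⟩
  obtain ⟨t, ht⟩ := key
  refine ⟨q t, hqne t, ?_⟩
  have := hreal (q t)
  apply Complex.ext
  · exact ht
  · simpa using this
end

section
/- Let σ^1, σ^2, σ^3, σ^4 be 2×2 Hermitian matrices such that L(p) := ∑_α σ^α p_α is nonzero for every nonzero p ∈ ℝ^4 (non-degeneracy). Define the real symmetric 4×4 matrix g by det L(p) = −∑ g^{αβ} p_α p_β. Then g has signature (3,1): three positive eigenvalues and one negative eigenvalue (i.e. g is a Lorentzian metric). -/
/-!
Write `L p = ∑ α, p α • σ α` and `Q p = -det (L p)`. Since `L` is an injective linear map into the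
four-dimensional real space of Hermitian `2 × 2` matrices, some `p₀` has `L p₀ = 1`, so `Q p₀ = -1`.
On the hyperplane `tr (L p) = 0` the form `Q` is positive definite: a traceless Hermitian matrix
`!![a, b; conj b, -a]` has determinant `-a² - |b|²`. Hence `g` has a negative eigenvalue; two of them
would give a negative definite plane, which meets the hyperplane; and a vector `v` in the kernel of `g`
would give `Q (v + t p₀) = t² Q p₀ ≤ 0` for the `t` putting `v + t p₀` on the hyperplane.
-/

open Matrix Finset

noncomputable def hermCoords : Matrix (Fin 2) (Fin 2) ℂ →ₗ[ℝ] Fin 4 → ℝ :=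
  LinearMap.pi ![Complex.reLm ∘ₗ entryLinearMap ℝ ℂ 0 0, Complex.reLm ∘ₗ entryLinearMap ℝ ℂ 1 1,
    Complex.reLm ∘ₗ entryLinearMap ℝ ℂ 0 1, Complex.imLm ∘ₗ entryLinearMap ℝ ℂ 0 1]

namespace Matrix.IsHermitian

section FinTwo

variable {H : Matrix (Fin 2) (Fin 2) ℂ}

lemma eq_zero_of_hermCoords_eq_zero (hH : H.IsHermitian) (h : hermCoords H = 0) : H = 0 := by
  have h00 : (H 0 0).re = 0 := congrFun h 0
  have h11 : (H 1 1).re = 0 := congrFun h 1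
  have e01 : H 0 1 = 0 := Complex.ext (congrFun h 2) (congrFun h 3)
  have e00 : H 0 0 = 0 := by
    rw [← hH.coe_re_apply_self 0, RCLike.re_to_complex, h00]; simp
  have e11 : H 1 1 = 0 := by
    rw [← hH.coe_re_apply_self 1, RCLike.re_to_complex, h11]; simp
  have e10 : H 1 0 = 0 := by rw [← hH.apply 1 0, e01, star_zero]
  exact Matrix.ext fun i j => by fin_cases i <;> fin_cases j <;> assumption

lemma det_re_fin_two (hH : H.IsHermitian) :
    H.det.re = (H 0 0).re * (H 1 1).re - Complex.normSq (H 0 1) := by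
  have h10 : H 1 0 = (starRingEnd ℂ) (H 0 1) := (hH.apply 1 0).symm
  rw [det_fin_two, h10, Complex.mul_conj, ← hH.coe_re_apply_self 0, ← hH.coe_re_apply_self 1]
  simp

lemma det_re_neg_of_trace_re_eq_zero (hH : H.IsHermitian) (htr : H.trace.re = 0) (hne : H ≠ 0) :
    H.det.re < 0 := by
  rw [trace_fin_two, Complex.add_re] at htr
  rw [hH.det_re_fin_two, show (H 1 1).re = -(H 0 0).re by linarith]
  by_contra! hdet
  have ha : (H 0 0).re ^ 2 = 0 := by
    nlinarith [sq_nonneg (H 0 0).re, Complex.normSq_nonneg (H 0 1)]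
  have h00 : (H 0 0).re = 0 := pow_eq_zero_iff two_ne_zero |>.mp ha
  have h01 : H 0 1 = 0 := Complex.normSq_eq_zero.mp (by nlinarith [Complex.normSq_nonneg (H 0 1)])
  refine hne (hH.eq_zero_of_hermCoords_eq_zero (funext fun i => ?_))
  fin_cases i <;> simp [hermCoords, h00, h01, show (H 1 1).re = 0 by linarith]

end FinTwo

section Eigenvalues

variable {n : Type*} [Fintype n] {g : Matrix n n ℝ}

lemma dotProduct_mulVec_add_smul_of_mulVec_eq_zero (hg : g.IsHermitian) {v : n → ℝ}
    (hv : g *ᵥ v = 0) (p : n → ℝ) (t : ℝ) :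
    (v + t • p) ⬝ᵥ g *ᵥ (v + t • p) = t ^ 2 * (p ⬝ᵥ g *ᵥ p) := by
  have hvp : v ⬝ᵥ g *ᵥ p = 0 := by
    rw [dotProduct_mulVec, ← mulVec_transpose, ← conjTranspose_eq_transpose_of_trivial, hg.eq, hv,
      zero_dotProduct]
  simp only [mulVec_add, mulVec_smul, hv, dotProduct_add, add_dotProduct, dotProduct_smul,
    smul_dotProduct, hvp, dotProduct_zero, smul_eq_mul]
  ring

lemma eq_zero_of_mulVec_eq_zero (hg : g.IsHermitian) (f : (n → ℝ) →ₗ[ℝ] ℝ)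
    (hf : ∀ r, f r = 0 → r ≠ 0 → 0 < r ⬝ᵥ g *ᵥ r) {p : n → ℝ} (hp : p ⬝ᵥ g *ᵥ p < 0)
    {v : n → ℝ} (hv : g *ᵥ v = 0) : v = 0 := by
  have hfp : f p ≠ 0 := fun h0 => by
    have := hf p h0 (by rintro rfl; simp at hp)
    linarith
  set t := -f v / f p
  have hft : f (v + t • p) = 0 := by simp [t]; field_simp; ring
  have hQ := hg.dotProduct_mulVec_add_smul_of_mulVec_eq_zero hv p t
  have hzero : v + t • p = 0 := by
    by_contra hne
    nlinarith [hf _ hft hne, sq_nonneg t]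
  have ht : t = 0 := by
    rw [hzero, zero_dotProduct] at hQ
    simpa [hp.ne] using hQ
  simpa [ht] using hzero

variable [DecidableEq n] (hg : g.IsHermitian)

lemma dotProduct_eigenvectorBasis (i j : n) :
    ⇑(hg.eigenvectorBasis i) ⬝ᵥ ⇑(hg.eigenvectorBasis j) = if i = j then 1 else 0 := by
  simpa [EuclideanSpace.inner_eq_star_dotProduct, dotProduct_comm] using
    orthonormal_iff_ite.mp hg.eigenvectorBasis.orthonormal i j

lemma dotProduct_mulVec_eigenvectorBasis (i j : n) :
    ⇑(hg.eigenvectorBasis i) ⬝ᵥ g *ᵥ ⇑(hg.eigenvectorBasis j) =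
      if i = j then hg.eigenvalues j else 0 := by
  rw [mulVec_eigenvectorBasis, dotProduct_smul, dotProduct_eigenvectorBasis, smul_eq_mul]
  split_ifs <;> simp

lemma dotProduct_mulVec_smul_add_smul_eigenvectorBasis {i j : n} (hij : i ≠ j) (s t : ℝ) :
    (s • ⇑(hg.eigenvectorBasis i) + t • ⇑(hg.eigenvectorBasis j)) ⬝ᵥ
        g *ᵥ (s • ⇑(hg.eigenvectorBasis i) + t • ⇑(hg.eigenvectorBasis j)) =
      s ^ 2 * hg.eigenvalues i + t ^ 2 * hg.eigenvalues j := by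
  simp only [mulVec_add, mulVec_smul, dotProduct_add, add_dotProduct, smul_dotProduct,
    dotProduct_smul, dotProduct_mulVec_eigenvectorBasis, if_neg hij, if_neg hij.symm, ↓reduceIte,
    smul_eq_mul]
  ring

lemma exists_eigenvalues_neg {p : n → ℝ} (hp : p ⬝ᵥ g *ᵥ p < 0) : ∃ i, hg.eigenvalues i < 0 := by
  by_contra! h
  have := (hg.posSemidef_iff_eigenvalues_nonneg.mpr h).dotProduct_mulVec_nonneg p
  rw [star_trivial] at this
  linarith

lemma eq_of_eigenvalues_neg (f : (n → ℝ) →ₗ[ℝ] ℝ) (hf : ∀ r, f r = 0 → 0 ≤ r ⬝ᵥ g *ᵥ r)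
    {i j : n} (hi : hg.eigenvalues i < 0) (hj : hg.eigenvalues j < 0) : i = j := by
  by_contra hij
  set w := fun k => ⇑(hg.eigenvectorBasis k)
  have hr := hf (f (w j) • w i + (-f (w i)) • w j) (by simp; ring)
  rw [dotProduct_mulVec_smul_add_smul_eigenvectorBasis hg hij] at hr
  have hfw : f (w j) ^ 2 * hg.eigenvalues i = 0 := by
    nlinarith [mul_nonpos_of_nonneg_of_nonpos (sq_nonneg (f (w j))) hi.le,
      mul_nonpos_of_nonneg_of_nonpos (sq_nonneg (-f (w i))) hj.le]
  have hwj := hf (w j) (by simpa [hi.ne] using hfw)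
  rw [dotProduct_mulVec_eigenvectorBasis, if_pos rfl] at hwj
  linarith

lemma eigenvalues_ne_zero (f : (n → ℝ) →ₗ[ℝ] ℝ)
    (hf : ∀ r, f r = 0 → r ≠ 0 → 0 < r ⬝ᵥ g *ᵥ r) {p : n → ℝ} (hp : p ⬝ᵥ g *ᵥ p < 0) (i : n) :
    hg.eigenvalues i ≠ 0 := by
  intro h0
  have hw := hg.eq_zero_of_mulVec_eq_zero f hf hp
    (by rw [mulVec_eigenvectorBasis, h0, zero_smul] : g *ᵥ ⇑(hg.eigenvectorBasis i) = 0)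
  simpa [hw] using hg.dotProduct_eigenvectorBasis i i

theorem card_eigenvalues_pos_and_neg (f : (n → ℝ) →ₗ[ℝ] ℝ)
    (hf : ∀ r, f r = 0 → r ≠ 0 → 0 < r ⬝ᵥ g *ᵥ r) {p : n → ℝ} (hp : p ⬝ᵥ g *ᵥ p < 0) :
    #{i | 0 < hg.eigenvalues i} = Fintype.card n - 1 ∧ #{i | hg.eigenvalues i < 0} = 1 := by
  obtain ⟨j, hj⟩ := hg.exists_eigenvalues_neg hp
  have hf' : ∀ r, f r = 0 → 0 ≤ r ⬝ᵥ g *ᵥ r := fun r hr => by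
    rcases eq_or_ne r 0 with rfl | hr0
    · simp
    · exact (hf r hr hr0).le
  have hneg : ∀ i, hg.eigenvalues i < 0 ↔ i = j :=
    fun i => ⟨fun hi => hg.eq_of_eigenvalues_neg f hf' hi hj, fun h => h ▸ hj⟩
  have hpos : ∀ i, 0 < hg.eigenvalues i ↔ i ≠ j := fun i => by
    rw [ne_eq, ← hneg, not_lt]
    exact ⟨le_of_lt, fun h => h.lt_of_ne' (hg.eigenvalues_ne_zero f hf hp i)⟩
  simp only [hpos, hneg, filter_ne', filter_eq', mem_univ, if_true, card_erase_of_mem, card_univ,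
    card_singleton, and_self]

end Eigenvalues

end Matrix.IsHermitian

lemma isHermitian_linearCombination {ι n : Type*} [Fintype ι] {σ : ι → Matrix n n ℂ}
    (hσ : ∀ i, (σ i).IsHermitian) (p : ι → ℝ) :
    (Fintype.linearCombination ℝ σ p).IsHermitian := by
  rw [Fintype.linearCombination_apply]
  exact isHermitian_iff_isSelfAdjoint.mpr <| isSelfAdjoint_sum _ fun i _ =>
    ((hσ i).smul (IsSelfAdjoint.all (p i))).isSelfAdjoint

lemma exists_apply_eq_of_injective (ℓ : (Fin 4 → ℝ) →ₗ[ℝ] Matrix (Fin 2) (Fin 2) ℂ)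
    (hℓ : ∀ p, (ℓ p).IsHermitian) (hinj : Function.Injective ℓ) {H : Matrix (Fin 2) (Fin 2) ℂ}
    (hH : H.IsHermitian) : ∃ p, ℓ p = H := by
  have hφ : Function.Injective (hermCoords ∘ₗ ℓ) := by
    refine (injective_iff_map_eq_zero _).mpr fun p hp => hinj ?_
    rw [(hℓ p).eq_zero_of_hermCoords_eq_zero hp, map_zero]
  obtain ⟨p, hp⟩ := LinearMap.injective_iff_surjective.mp hφ (hermCoords H)
  refine ⟨p, sub_eq_zero.mp (((hℓ p).sub hH).eq_zero_of_hermCoords_eq_zero ?_)⟩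
  rw [map_sub, sub_eq_zero]
  exact hp

theorem metric_is_lorentzian
    (σ : Fin 4 → Matrix (Fin 2) (Fin 2) ℂ)
    (hherm : ∀ α, (σ α).IsHermitian)
    (hnondeg : ∀ p : Fin 4 → ℝ, p ≠ 0 → (∑ α, (p α : ℂ) • σ α) ≠ 0)
    (g : Matrix (Fin 4) (Fin 4) ℝ) (hg : g.IsHermitian)
    (hdet : ∀ p : Fin 4 → ℝ,
      (∑ α, (p α : ℂ) • σ α).det = -((p ⬝ᵥ (g *ᵥ p) : ℝ) : ℂ)) :
    (Finset.univ.filter (fun i => 0 < hg.eigenvalues i)).card = 3 ∧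
    (Finset.univ.filter (fun i => hg.eigenvalues i < 0)).card = 1 := by
  set L := Fintype.linearCombination ℝ σ
  have hL (p : Fin 4 → ℝ) : ∑ α, (p α : ℂ) • σ α = L p := by
    simp only [L, Fintype.linearCombination_apply, Complex.coe_smul]
  have hQ (p : Fin 4 → ℝ) : p ⬝ᵥ g *ᵥ p = -(L p).det.re := by
    have h := congrArg Complex.re (hdet p)
    rw [hL, Complex.neg_re, Complex.ofReal_re] at h
    linarith
  have hLinj : Function.Injective L := (injective_iff_map_eq_zero L).mpr fun p hp =>
    by_contra fun hp0 => hnondeg p hp0 (by rw [hL, hp])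
  obtain ⟨p₀, hp₀⟩ := exists_apply_eq_of_injective L (isHermitian_linearCombination hherm) hLinj
    isHermitian_one
  have hpos (r : Fin 4 → ℝ) (hr : (Complex.reLm ∘ₗ traceLinearMap (Fin 2) ℝ ℂ ∘ₗ L) r = 0)
      (hr0 : r ≠ 0) : 0 < r ⬝ᵥ g *ᵥ r := by
    rw [hQ, neg_pos]
    exact (isHermitian_linearCombination hherm r).det_re_neg_of_trace_re_eq_zero hr
      (by rw [← hL]; exact hnondeg r hr0)
  simpa using hg.card_eigenvalues_pos_and_neg _ hpos (p := p₀) (by rw [hQ, hp₀, det_one]; simp)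
end
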